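/- For n ≥ 3, the mincut graph of the Cartesian product K_n □ K_2 is isomorphic to the graph obtained from K_n □ K_2 by adding one new vertex joined to all 2n existing vertices (the vertex join of K_n □ K_2). -/

import Mathlib

open SimpleGraph

variable {V : Type*}

/-- `X` is an edge-cut of `G`: a set of edges of `G` whose deletion disconnects `G`. -/
def IsEdgeCut (G : SimpleGraph V) (X : Set (Sym2 V)) : Prop :=
  X ⊆ G.edgeSet ∧ ¬ (G.deleteEdges X).Connected

/-- `X` is a minimum edge-cut (mincut) of `G`. -/
def IsMinCut (G : SimpleGraph V) (X : Set (Sym2 V)) : Prop :=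
  IsEdgeCut G X ∧ ∀ Y : Set (Sym2 V), IsEdgeCut G Y → X.ncard ≤ Y.ncard

/-- The edge connectivity of `G`: minimum cardinality of an edge-cut. -/
noncomputable def edgeConn (G : SimpleGraph V) : ℕ :=
  sInf {n | ∃ X : Set (Sym2 V), IsEdgeCut G X ∧ X.ncard = n}

/-- The mincut graph `X(G)`: intersection graph of the minimum edge-cuts of `G`. -/
def mincutGraph (G : SimpleGraph V) : SimpleGraph {X : Set (Sym2 V) // IsMinCut G X} :=
  SimpleGraph.fromRel (fun A B => (A.1 ∩ B.1).Nonempty)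

/-- The vertex join of `G`: add one new vertex (`none`) adjacent to all vertices of `G`. -/
def vertexJoin {α : Type*} (G : SimpleGraph α) : SimpleGraph (Option α) :=
  SimpleGraph.fromRel (fun a b =>
    (a = none ∧ b ≠ none) ∨ ∃ x y : α, a = some x ∧ b = some y ∧ G.Adj x y)

/-! Every edge cut contains the boundary `∂S` of a proper nonempty vertex set `S`, so the mincuts
are exactly the boundaries of minimum size. If `S` meets the two copies of `K_n` in `A` and `B`,
then `|∂S| = |A| |Aᶜ| + |B| |Bᶜ| + |A Δ B|` (edges inside the copies plus matching edges). For
`n ≥ 3` this is at least `n`, with equality only when `S` or `Sᶜ` is a single vertex or a copy of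
`K_n`. Hence the mincuts are the `2n` vertex stars and the matching. Two distinct stars meet iff
their centres are adjacent, and the matching meets every star, which is the vertex join. -/

open Finset

namespace Finset

variable {α β : Type*} [DecidableEq α] [DecidableEq β]

def row [Fintype α] (S : Finset (α × β)) (b : β) : Finset α := {a | (a, b) ∈ S}

def col [Fintype β] (S : Finset (α × β)) (a : α) : Finset β := {b | (a, b) ∈ S}

@[simp] theorem mem_row [Fintype α] {S : Finset (α × β)} {a : α} {b : β} :
    a ∈ S.row b ↔ (a, b) ∈ S := by simp [row]

@[simp] theorem mem_col [Fintype β] {S : Finset (α × β)} {a : α} {b : β} :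
    b ∈ S.col a ↔ (a, b) ∈ S := by simp [col]

variable [Fintype α] [Fintype β]

theorem row_compl (S : Finset (α × β)) (b : β) : Sᶜ.row b = (S.row b)ᶜ := by
  ext; simp

theorem card_eq_sum_card_row (S : Finset (α × β)) : #S = ∑ b, #(S.row b) := by
  rw [card_eq_sum_card_fiberwise (f := Prod.snd) (t := univ) fun _ _ => mem_coe.2 (mem_univ _)]
  refine sum_congr rfl fun b _ => card_nbij' Prod.fst (·, b) ?_ ?_ ?_ ?_
  · rintro ⟨a, _⟩ hp
    simp only [mem_coe, mem_filter] at hp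
    obtain ⟨hp, rfl⟩ := hp
    simpa using hp
  · intro a ha
    simpa using ha
  · rintro ⟨a, _⟩ hp
    simp only [mem_coe, mem_filter] at hp
    obtain ⟨-, rfl⟩ := hp
    rfl
  · intro a _
    rfl

theorem card_row_sdiff_row_le (S : Finset (α × β)) (i j : β) :
    #(S.row i \ S.row j) ≤ ∑ a, #(S.col a) * #(S.col a)ᶜ :=
  calc #(S.row i \ S.row j) = ∑ a ∈ S.row i \ S.row j, 1 := card_eq_sum_ones _
    _ ≤ ∑ a ∈ S.row i \ S.row j, #(S.col a) * #(S.col a)ᶜ := by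
      refine sum_le_sum fun a ha => Nat.mul_pos (card_pos.2 ⟨i, ?_⟩) (card_pos.2 ⟨j, ?_⟩) <;>
        simp_all
    _ ≤ ∑ a, #(S.col a) * #(S.col a)ᶜ := sum_le_sum_of_subset (subset_univ _)

theorem eq_univ_product_zero_of_row {S : Finset (α × Fin 2)} (h₀ : S.row 0 = univ)
    (h₁ : S.row 1 = ∅) : S = univ ×ˢ {0} := by
  ext ⟨a, i⟩
  rw [eq_univ_iff_forall] at h₀
  rw [eq_empty_iff_forall_notMem] at h₁
  fin_cases i <;> simp_all

end Finset

namespace SimpleGraph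

section EdgeBoundary

variable [Fintype V] [DecidableEq V] (G : SimpleGraph V) [DecidableRel G.Adj]

def edgeBoundary (S : Finset V) : Finset (Sym2 V) :=
  (G.interedges S Sᶜ).image fun p ↦ s(p.1, p.2)

variable {G}

theorem mk_mem_edgeBoundary {S : Finset V} {x y : V} :
    s(x, y) ∈ G.edgeBoundary S ↔ G.Adj x y ∧ (x ∈ S ↔ y ∉ S) := by
  simp only [edgeBoundary, mem_image, Prod.exists, mk_mem_interedges_iff, mem_compl,
    Sym2.eq_iff]
  constructor
  · rintro ⟨a, b, ⟨ha, hb, hab⟩, ⟨rfl, rfl⟩ | ⟨rfl, rfl⟩⟩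
    · exact ⟨hab, by tauto⟩
    · exact ⟨hab.symm, by tauto⟩
  · rintro ⟨hxy, hS⟩
    by_cases hx : x ∈ S
    · exact ⟨x, y, ⟨hx, hS.1 hx, hxy⟩, Or.inl ⟨rfl, rfl⟩⟩
    · exact ⟨y, x, ⟨not_not.1 (mt hS.2 hx), hx, hxy.symm⟩, Or.inr ⟨rfl, rfl⟩⟩

theorem edgeBoundary_subset_edgeSet (S : Finset V) :
    (G.edgeBoundary S : Set (Sym2 V)) ⊆ G.edgeSet := by
  intro e he
  induction e using Sym2.ind with
  | h x y => exact (mk_mem_edgeBoundary.1 he).1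

theorem edgeBoundary_compl (S : Finset V) : G.edgeBoundary Sᶜ = G.edgeBoundary S := by
  ext e
  induction e using Sym2.ind with
  | h x y => simp only [mk_mem_edgeBoundary, mem_compl]; tauto

theorem card_edgeBoundary (S : Finset V) : #(G.edgeBoundary S) = #(G.interedges S Sᶜ) := by
  refine card_image_of_injOn fun p hp q hq hpq => ?_
  rw [mem_coe, mem_interedges_iff, mem_compl] at hp hq
  rcases Sym2.mk_eq_mk_iff.1 hpq with rfl | rfl
  · rfl
  · exact absurd hp.1 hq.2.1

theorem edgeBoundary_singleton (v : V) : G.edgeBoundary {v} = G.incidenceFinset v := by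
  ext e
  induction e using Sym2.ind with
  | h x y =>
    simp only [mk_mem_edgeBoundary, mem_singleton, mem_incidenceFinset, mk'_mem_incidenceSet_iff]
    constructor
    · rintro ⟨h, hxy⟩
      exact ⟨h, by tauto⟩
    · rintro ⟨h, rfl | rfl⟩
      · exact ⟨h, by simp [h.ne']⟩
      · exact ⟨h, by simp [h.ne]⟩

theorem card_edgeBoundary_singleton (v : V) : #(G.edgeBoundary {v}) = G.degree v := by
  rw [edgeBoundary_singleton, card_incidenceFinset_eq_degree]

theorem isEdgeCut_edgeBoundary {S : Finset V} (hS : S.Nonempty) (hSc : Sᶜ.Nonempty) :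
    IsEdgeCut G (G.edgeBoundary S) := by
  refine ⟨edgeBoundary_subset_edgeSet S, fun hconn => ?_⟩
  obtain ⟨x, hx⟩ := hS
  obtain ⟨y, hy⟩ := hSc
  obtain ⟨p⟩ := hconn.preconnected x y
  obtain ⟨d, -, hd₁, hd₂⟩ := p.exists_boundary_dart S hx (by simpa using hy)
  have hd := deleteEdges_adj.1 d.adj
  exact hd.2 (mk_mem_edgeBoundary.2 ⟨hd.1, by simp_all⟩)

theorem exists_edgeBoundary_subset_of_isEdgeCut [Nonempty V] {X : Set (Sym2 V)}
    (hX : IsEdgeCut G X) : ∃ S : Finset V, S.Nonempty ∧ Sᶜ.Nonempty ∧ ↑(G.edgeBoundary S) ⊆ X := by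
  classical
  obtain ⟨u, v, huv⟩ : ∃ u v, ¬(G.deleteEdges X).Reachable u v := by
    by_contra! h
    exact hX.2 ((connected_iff _).2 ⟨h, inferInstance⟩)
  refine ⟨({w | (G.deleteEdges X).Reachable u w} : Finset V), ⟨u, by simp⟩, ⟨v, by simpa using huv⟩, ?_⟩
  intro e he
  induction e using Sym2.ind with
  | h x y =>
    obtain ⟨hxy, hS⟩ := mk_mem_edgeBoundary.1 he
    by_contra hxyX
    have hadj : (G.deleteEdges X).Adj x y := deleteEdges_adj.2 ⟨hxy, hxyX⟩
    simp only [mem_filter, mem_univ, true_and] at hS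
    by_cases hx : (G.deleteEdges X).Reachable u x
    · exact hS.1 hx (hx.trans hadj.reachable)
    · exact hx ((not_not.1 (mt hS.2 hx)).trans hadj.symm.reachable)

theorem isMinCut_iff_exists_edgeBoundary {k : ℕ}
    (hk : ∀ S : Finset V, S.Nonempty → Sᶜ.Nonempty → k ≤ #(G.edgeBoundary S))
    (hS₀ : ∃ S : Finset V, S.Nonempty ∧ Sᶜ.Nonempty ∧ #(G.edgeBoundary S) = k)
    {X : Set (Sym2 V)} :
    IsMinCut G X ↔ ∃ S : Finset V,
      S.Nonempty ∧ Sᶜ.Nonempty ∧ #(G.edgeBoundary S) = k ∧ X = G.edgeBoundary S := by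
  obtain ⟨S₀, hS₀, hS₀c, hS₀k⟩ := hS₀
  have : Nonempty V := hS₀.to_type
  have le_ncard (Y : Set (Sym2 V)) (hY : IsEdgeCut G Y) : k ≤ Y.ncard := by
    obtain ⟨S, hS, hSc, hSY⟩ := exists_edgeBoundary_subset_of_isEdgeCut hY
    calc k ≤ #(G.edgeBoundary S) := hk S hS hSc
      _ = (G.edgeBoundary S : Set (Sym2 V)).ncard := (Set.ncard_coe_finset _).symm
      _ ≤ Y.ncard := Set.ncard_le_ncard hSY
  constructor
  · rintro ⟨hX, hmin⟩
    obtain ⟨S, hS, hSc, hSX⟩ := exists_edgeBoundary_subset_of_isEdgeCut hX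
    have hXk : X.ncard ≤ k := by
      simpa [hS₀k] using hmin _ (isEdgeCut_edgeBoundary hS₀ hS₀c)
    have hSX' : #(G.edgeBoundary S) ≤ X.ncard := by
      rw [← Set.ncard_coe_finset]
      exact Set.ncard_le_ncard hSX
    have := hk S hS hSc
    refine ⟨S, hS, hSc, by omega, (Set.eq_of_subset_of_ncard_le hSX ?_).symm⟩
    rw [Set.ncard_coe_finset]
    omega
  · rintro ⟨S, hS, hSc, hSk, rfl⟩
    refine ⟨isEdgeCut_edgeBoundary hS hSc, fun Y hY => ?_⟩
    rw [Set.ncard_coe_finset, hSk]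
    exact le_ncard Y hY

end EdgeBoundary

theorem incidenceSet_inter_incidenceSet_nonempty_iff {G : SimpleGraph V} {v w : V} (h : v ≠ w) :
    (G.incidenceSet v ∩ G.incidenceSet w).Nonempty ↔ G.Adj v w := by
  by_cases hvw : G.Adj v w
  · simp [G.incidenceSet_inter_incidenceSet_of_adj hvw, hvw]
  · simp [G.incidenceSet_inter_incidenceSet_of_not_adj hvw h, hvw]

theorem incidenceSet_injective {G : SimpleGraph V}
    (h : ∀ v, ∃ a b, a ≠ b ∧ G.Adj v a ∧ G.Adj v b) : Function.Injective G.incidenceSet := by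
  intro v w hvw
  by_contra hne
  obtain ⟨a, b, hab, ha, hb⟩ := h v
  have eq_of_adj (u : V) (hu : G.Adj v u) : w = u :=
    (Sym2.mem_iff.1 (hvw ▸ (G.mem_incidenceSet v u).2 hu).2).resolve_left (Ne.symm hne)
  exact hab ((eq_of_adj a ha).symm.trans (eq_of_adj b hb))

section BoxProd

variable {α β : Type*} [Fintype α] [Fintype β] [DecidableEq α] [DecidableEq β]
  {G : SimpleGraph α} {H : SimpleGraph β} [DecidableRel G.Adj] [DecidableRel H.Adj]

instance boxProdDecidableRel : DecidableRel (G □ H).Adj :=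
  fun _ _ => decidable_of_iff' _ boxProd_adj

theorem card_horizontal_interedges_boxProd (S : Finset (α × β)) :
    #{p ∈ (G □ H).interedges S Sᶜ | p.1.2 = p.2.2} =
      ∑ b, #(G.interedges (S.row b) (S.row b)ᶜ) := by
  rw [card_eq_sum_card_fiberwise (f := fun p => p.1.2) (t := univ)
    fun _ _ => mem_coe.2 (mem_univ _)]
  refine sum_congr rfl fun b _ => ?_
  refine card_nbij' (fun p => (p.1.1, p.2.1)) (fun q => ((q.1, b), (q.2, b))) ?_ ?_ ?_ ?_
  · rintro ⟨⟨a, _⟩, ⟨a', _⟩⟩ hp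
    simp only [mem_coe, mem_filter, mem_interedges_iff, mem_compl, boxProd_adj] at hp
    obtain ⟨⟨⟨h₁, h₂, hadj⟩, rfl⟩, rfl⟩ := hp
    simp_all [mk_mem_interedges_iff]
  · rintro ⟨a, a'⟩ hq
    simp_all [mem_interedges_iff, boxProd_adj]
  · rintro ⟨⟨a, _⟩, ⟨a', _⟩⟩ hp
    simp only [mem_coe, mem_filter] at hp
    obtain ⟨⟨-, rfl⟩, rfl⟩ := hp
    rfl
  · intro q _
    rfl

theorem card_vertical_interedges_boxProd (S : Finset (α × β)) :
    #{p ∈ (G □ H).interedges S Sᶜ | ¬p.1.2 = p.2.2} =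
      ∑ a, #(H.interedges (S.col a) (S.col a)ᶜ) := by
  rw [card_eq_sum_card_fiberwise (f := fun p => p.1.1) (t := univ)
    fun _ _ => mem_coe.2 (mem_univ _)]
  refine sum_congr rfl fun a _ => ?_
  refine card_nbij' (fun p => (p.1.2, p.2.2)) (fun q => ((a, q.1), (a, q.2))) ?_ ?_ ?_ ?_
  · rintro ⟨⟨_, b⟩, ⟨_, b'⟩⟩ hp
    simp only [mem_coe, mem_filter, mem_interedges_iff, mem_compl, boxProd_adj] at hp
    obtain ⟨⟨⟨h₁, h₂, ⟨-, rfl⟩ | ⟨hadj, rfl⟩⟩, hbb⟩, rfl⟩ := hp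
    · exact absurd rfl hbb
    · simp_all [mk_mem_interedges_iff]
  · rintro ⟨b, b'⟩ hq
    simp only [mem_coe, mem_interedges_iff] at hq
    simp_all [mem_interedges_iff, boxProd_adj, hq.2.2.ne]
  · rintro ⟨⟨_, b⟩, ⟨_, b'⟩⟩ hp
    simp only [mem_coe, mem_filter, mem_interedges_iff, mem_compl, boxProd_adj] at hp
    obtain ⟨⟨⟨-, -, ⟨-, rfl⟩ | ⟨-, rfl⟩⟩, hbb⟩, rfl⟩ := hp
    · exact absurd rfl hbb
    · rfl
  · intro q _
    rfl

theorem card_interedges_boxProd (S : Finset (α × β)) :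
    #((G □ H).interedges S Sᶜ) =
      ∑ b, #(G.interedges (S.row b) (S.row b)ᶜ) + ∑ a, #(H.interedges (S.col a) (S.col a)ᶜ) := by
  rw [← card_filter_add_card_filter_not (fun p : (α × β) × (α × β) => p.1.2 = p.2.2),
    card_horizontal_interedges_boxProd, card_vertical_interedges_boxProd]

theorem card_interedges_top_compl (s : Finset α) :
    #((⊤ : SimpleGraph α).interedges s sᶜ) = #s * #sᶜ := by
  rw [interedges, Rel.interedges, filter_true_of_mem, card_product]
  rintro ⟨x, y⟩ hxy
  simp only [mem_product, mem_compl] at hxy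
  exact (top_adj x y).2 (ne_of_mem_of_not_mem hxy.1 hxy.2)

theorem card_edgeBoundary_top_boxProd_top (S : Finset (α × β)) :
    #(((⊤ : SimpleGraph α) □ (⊤ : SimpleGraph β)).edgeBoundary S) =
      ∑ b, #(S.row b) * #(S.row b)ᶜ + ∑ a, #(S.col a) * #(S.col a)ᶜ := by
  simp only [card_edgeBoundary, card_interedges_boxProd, card_interedges_top_compl]

end BoxProd

end SimpleGraph

theorem nonempty_mincutGraph_iso_vertexJoin {G : SimpleGraph V} (M : Set (Sym2 V))
    (hcut : ∀ X, IsMinCut G X ↔ X = M ∨ ∃ v, X = G.incidenceSet v)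
    (hinj : Function.Injective G.incidenceSet) (hM : ∀ v, G.incidenceSet v ≠ M)
    (hmeet : ∀ v, (M ∩ G.incidenceSet v).Nonempty) :
    Nonempty (mincutGraph G ≃g vertexJoin G) := by
  let f : Option V → {X // IsMinCut G X} := fun o =>
    o.elim ⟨M, (hcut M).2 (Or.inl rfl)⟩ fun v => ⟨G.incidenceSet v, (hcut _).2 (Or.inr ⟨v, rfl⟩)⟩
  have hf : Function.Bijective f := by
    constructor
    · rintro (_ | v) (_ | w) h <;> simp only [f, Option.elim, Subtype.mk.injEq] at h
      · rfl
      · exact absurd h.symm (hM w)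
      · exact absurd h (hM v)
      · rw [hinj h]
    · rintro ⟨X, hX⟩
      rcases (hcut X).1 hX with rfl | ⟨v, rfl⟩
      · exact ⟨none, rfl⟩
      · exact ⟨some v, rfl⟩
  refine ⟨(Iso.symm ⟨Equiv.ofBijective f hf, ?_⟩)⟩
  rintro (_ | v) (_ | w)
  · simp [f, mincutGraph, vertexJoin]
  · simpa [f, mincutGraph, vertexJoin] using ⟨(hM w).symm, Or.inl (hmeet w)⟩
  · simpa [f, mincutGraph, vertexJoin] using ⟨hM v, Or.inr (hmeet v)⟩
  · simp only [f, Equiv.ofBijective_apply, Option.elim, mincutGraph, vertexJoin, fromRel_adj,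
      ne_eq, Subtype.mk.injEq, hinj.eq_iff, Option.some.injEq, reduceCtorEq, false_and,
      exists_and_left, exists_eq_left', false_or, Set.inter_comm (G.incidenceSet w), or_self,
      G.adj_comm w v]
    exact and_congr_right incidenceSet_inter_incidenceSet_nonempty_iff

/-- `a`, `b` are the sizes of the two layers of a vertex set of `K_n □ K_2`, `a'`, `b'` those of
its complement, and `d ≥ |a - b|` is the number of matching edges leaving it. -/
theorem Nat.eq_and_cases_of_mul_add_mul_add_le {n a a' b b' d : ℕ} (hn : 3 ≤ n)
    (ha : a + a' = n) (hb : b + b' = n) (hab : a ≤ b + d) (hba : b ≤ a + d) (hne : 1 ≤ a + b)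
    (hne' : 1 ≤ a' + b') (hT : a * a' + b * b' + d ≤ n) :
    a * a' + b * b' + d = n ∧ (a + b = 1 ∨ a' + b' = 1 ∨ a' = 0 ∧ b = 0 ∨ a = 0 ∧ b' = 0) := by
  have split (x y : ℕ) (hxy : x + y = n) : x = 0 ∨ y = 0 ∨ x = 1 ∨ y = 1 ∨ n ≤ x * y := by
    rcases Nat.lt_or_ge x 2 with hx | hx
    · omega
    rcases Nat.lt_or_ge y 2 with hy | hy
    · omega
    right; right; right; right
    nlinarith
  rcases split a a' ha with h | h | h | h | h <;> rcases split b b' hb with h' | h' | h' | h' | h' <;>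
    subst_vars <;> omega

namespace SimpleGraph

variable {n : ℕ}

local notation "K[" n "]□K₂" => boxProd (⊤ : SimpleGraph (Fin n)) (⊤ : SimpleGraph (Fin 2))

theorem exists_two_neighbors_top_boxProd_top (hn : 2 ≤ n) (v : Fin n × Fin 2) :
    ∃ a b, a ≠ b ∧ (K[n]□K₂).Adj v a ∧ (K[n]□K₂).Adj v b := by
  have : Nontrivial (Fin n) := Fin.nontrivial_iff_two_le.2 hn
  obtain ⟨y, hy⟩ := exists_ne v.1
  obtain ⟨j, hj⟩ := exists_ne v.2
  exact ⟨(y, v.2), (v.1, j), by simp [hy], by simp [boxProd_adj, hy.symm],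
    by simp [boxProd_adj, hj.symm]⟩

theorem card_edgeBoundary_singleton_top_boxProd_top (v : Fin n × Fin 2) :
    #((K[n]□K₂).edgeBoundary {v}) = n := by
  have h₁ := complete_graph_degree v.1
  have h₂ := complete_graph_degree v.2
  simp only [Fintype.card_fin] at h₁ h₂
  rw [card_edgeBoundary_singleton, degree_boxProd, h₁, h₂]
  have := v.1.pos
  omega

theorem card_edgeBoundary_layer_top_boxProd_top :
    #((K[n]□K₂).edgeBoundary (univ ×ˢ {0})) = n := by
  have : #({x | 0 = x} : Finset (Fin 2)) * #({x | ¬0 = x} : Finset (Fin 2)) = 1 := by decide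
  simp [card_edgeBoundary_top_boxProd_top, row, col, this]

theorem card_edgeBoundary_top_boxProd_top_of_le (hn : 3 ≤ n) {S : Finset (Fin n × Fin 2)}
    (hS : S.Nonempty) (hSc : Sᶜ.Nonempty) (hle : #((K[n]□K₂).edgeBoundary S) ≤ n) :
    #((K[n]□K₂).edgeBoundary S) = n ∧
      (#S = 1 ∨ #Sᶜ = 1 ∨ S = univ ×ˢ {0} ∨ Sᶜ = univ ×ˢ {0}) := by
  rw [card_edgeBoundary_top_boxProd_top, Fin.sum_univ_two] at hle ⊢
  have hA : #(S.row 0) + #(S.row 0)ᶜ = n := by rw [card_add_card_compl, Fintype.card_fin]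
  have hB : #(S.row 1) + #(S.row 1)ᶜ = n := by rw [card_add_card_compl, Fintype.card_fin]
  have hAB := (le_card_sdiff (S.row 1) (S.row 0)).trans (card_row_sdiff_row_le S 0 1)
  have hBA := (le_card_sdiff (S.row 0) (S.row 1)).trans (card_row_sdiff_row_le S 1 0)
  have hcard : #S = #(S.row 0) + #(S.row 1) := by rw [card_eq_sum_card_row, Fin.sum_univ_two]
  have hcard' : #Sᶜ = #(S.row 0)ᶜ + #(S.row 1)ᶜ := by
    rw [card_eq_sum_card_row, Fin.sum_univ_two, row_compl, row_compl]
  have := hS.card_pos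
  have := hSc.card_pos
  obtain ⟨heq, hcases⟩ := Nat.eq_and_cases_of_mul_add_mul_add_le hn hA hB (by omega) (by omega)
    (by omega) (by omega) hle
  refine ⟨heq, ?_⟩
  rcases hcases with h | h | ⟨h₀, h₁⟩ | ⟨h₀, h₁⟩
  · exact Or.inl (by omega)
  · exact Or.inr (Or.inl (by omega))
  · refine Or.inr (Or.inr (Or.inl (eq_univ_product_zero_of_row ?_ (card_eq_zero.1 h₁))))
    exact (compl_eq_empty_iff _).1 (card_eq_zero.1 h₀)
  · refine Or.inr (Or.inr (Or.inr (eq_univ_product_zero_of_row ?_ ?_)))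
    · rw [row_compl, card_eq_zero.1 h₀, compl_empty]
    · rw [row_compl, (compl_eq_empty_iff _).1 (card_eq_zero.1 h₁), compl_univ]

theorem isMinCut_top_boxProd_top_iff (hn : 3 ≤ n) {X : Set (Sym2 (Fin n × Fin 2))} :
    IsMinCut K[n]□K₂ X ↔
      X = (K[n]□K₂).edgeBoundary (univ ×ˢ {0}) ∨ ∃ v, X = (K[n]□K₂).incidenceSet v := by
  have singleton_compl_nonempty (v : Fin n × Fin 2) : ({v}ᶜ : Finset _).Nonempty := by
    obtain ⟨a, -, -, ha, -⟩ := exists_two_neighbors_top_boxProd_top (by omega) v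
    exact ⟨a, by simpa using ha.ne'⟩
  have layer_nonempty : (univ ×ˢ {0} : Finset (Fin n × Fin 2)).Nonempty :=
    ⟨(⟨0, by omega⟩, 0), by simp⟩
  have layer_compl_nonempty : (univ ×ˢ {0} : Finset (Fin n × Fin 2))ᶜ.Nonempty :=
    ⟨(⟨0, by omega⟩, 1), by simp⟩
  have le_card (S : Finset (Fin n × Fin 2)) (hS : S.Nonempty) (hSc : Sᶜ.Nonempty) :
      n ≤ #((K[n]□K₂).edgeBoundary S) := by
    by_contra! h
    have := (card_edgeBoundary_top_boxProd_top_of_le hn hS hSc h.le).1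
    omega
  rw [isMinCut_iff_exists_edgeBoundary le_card ⟨_, layer_nonempty, layer_compl_nonempty,
    card_edgeBoundary_layer_top_boxProd_top⟩]
  constructor
  · rintro ⟨S, hS, hSc, hSn, rfl⟩
    rcases (card_edgeBoundary_top_boxProd_top_of_le hn hS hSc hSn.le).2 with h | h | rfl | h
    · obtain ⟨v, rfl⟩ := card_eq_one.1 h
      exact Or.inr ⟨v, by rw [edgeBoundary_singleton, coe_incidenceFinset]⟩
    · obtain ⟨v, hv⟩ := card_eq_one.1 h
      exact Or.inr ⟨v, by rw [← edgeBoundary_compl, hv, edgeBoundary_singleton, coe_incidenceFinset]⟩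
    · exact Or.inl rfl
    · exact Or.inl (by rw [← edgeBoundary_compl, h])
  · rintro (rfl | ⟨v, rfl⟩)
    · exact ⟨_, layer_nonempty, layer_compl_nonempty, card_edgeBoundary_layer_top_boxProd_top, rfl⟩
    · exact ⟨{v}, singleton_nonempty v, singleton_compl_nonempty v,
        card_edgeBoundary_singleton_top_boxProd_top v,
        by rw [edgeBoundary_singleton, coe_incidenceFinset]⟩

theorem incidenceSet_ne_edgeBoundary_layer_top_boxProd_top (hn : 2 ≤ n) (v : Fin n × Fin 2) :
    (K[n]□K₂).incidenceSet v ≠ (K[n]□K₂).edgeBoundary (univ ×ˢ {0}) := by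
  have : Nontrivial (Fin n) := Fin.nontrivial_iff_two_le.2 hn
  obtain ⟨y, hy⟩ := exists_ne v.1
  intro h
  have hmem := (mem_incidenceSet (K[n]□K₂) v (y, v.2)).2 (by simp [boxProd_adj, hy.symm])
  rw [h, mem_coe, mk_mem_edgeBoundary] at hmem
  simp only [mem_product, mem_univ, true_and, mem_singleton] at hmem
  exact iff_not_self hmem.2

theorem edgeBoundary_layer_inter_incidenceSet_top_boxProd_top_nonempty (v : Fin n × Fin 2) :
    ((K[n]□K₂).edgeBoundary (univ ×ˢ {0}) ∩ (K[n]□K₂).incidenceSet v : Set _).Nonempty := by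
  obtain ⟨x, i⟩ := v
  refine ⟨s((x, 0), (x, 1)), ?_, ?_⟩
  · simp [mk_mem_edgeBoundary, boxProd_adj]
  · fin_cases i <;> simp [incidenceSet, boxProd_adj]

end SimpleGraph

theorem mincutGraph_boxProd_complete (n : ℕ) (hn : 3 ≤ n) :
    Nonempty (mincutGraph ((⊤ : SimpleGraph (Fin n)) □ (⊤ : SimpleGraph (Fin 2)))
      ≃g vertexJoin ((⊤ : SimpleGraph (Fin n)) □ (⊤ : SimpleGraph (Fin 2)))) :=
  nonempty_mincutGraph_iso_vertexJoin _ (fun _ => isMinCut_top_boxProd_top_iff hn)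
    (incidenceSet_injective (exists_two_neighbors_top_boxProd_top (by omega)))
    (incidenceSet_ne_edgeBoundary_layer_top_boxProd_top (by omega))
    edgeBoundary_layer_inter_incidenceSet_top_boxProd_top_nonempty
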